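/- Fix μ > 0. For every nonnegative integer l, every t > 0 and every (x,y) ∈ ℝ², |U_l(x,y,t) − V_l(x,y,t)| ≤ (Γ((7+2l)/4) / (4π^{3/2} μ^{(7+2l)/4})) t^{−5/4 − l/2}; in particular ‖∂ₓˡ(U(·,·,t) − V(·,·,t))‖_{L^∞(ℝ²)} ≤ C t^{−5/4 − l/2} with C = Γ((7+2l)/4)/(4π^{3/2}μ^{(7+2l)/4}). -/

import Mathlib

open MeasureTheory Filter Complex

/-! The integrands of `U_l` and `V_l` differ only by the factor `e^{itξ³}`, and
`|e^{iθ} - 1| ≤ |θ|`. Hence `|U_l - V_l|` is at most `t^{1/2}/(4π^{3/2})` times the Gamma-type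
integral `∫ |ξ|^{l+5/2} e^{-μtξ²} dξ = (μt)^{-(7+2l)/4} Γ((7+2l)/4)`. -/

noncomputable section

/-- The kernel `U_l = ∂ₓˡ U`, where `U` is the fundamental solution of the linearized
equation `u_t + u_{xxx} + u_{yyx} - μ u_{xx} = 0`:
`U_l(x,y,t) = (t^{-1/2}/(4π^{3/2})) ∫ (iξ)^l |ξ|^{-1/2} e^{-μtξ²}
  exp(i(tξ³ - y²/(4tξ) + (π/4) sgn ξ + xξ)) dξ`. -/
def kernelU (μ : ℝ) (l : ℕ) (x y t : ℝ) : ℂ :=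
  ((t ^ (-(1:ℝ)/2) / (4 * Real.pi ^ ((3:ℝ)/2)) : ℝ) : ℂ) *
    ∫ ξ : ℝ, (Complex.I * (ξ : ℂ)) ^ l *
      ((|ξ| ^ (-(1:ℝ)/2) * Real.exp (-(μ * t) * ξ ^ 2) : ℝ) : ℂ) *
      Complex.exp (Complex.I *
        ((t * ξ ^ 3 - y ^ 2 / (4 * t * ξ) + (Real.pi / 4) * Real.sign ξ + x * ξ : ℝ) : ℂ))

/-- The kernel `V_l = ∂ₓˡ V`, where `V` is the fundamental solution of
`v_t + v_{yyx} - μ v_{xx} = 0`: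
`V_l(x,y,t) = (t^{-1/2}/(4π^{3/2})) ∫ (iξ)^l |ξ|^{-1/2} e^{-μtξ²}
  exp(i(- y²/(4tξ) + (π/4) sgn ξ + xξ)) dξ`. -/
def kernelV (μ : ℝ) (l : ℕ) (x y t : ℝ) : ℂ :=
  ((t ^ (-(1:ℝ)/2) / (4 * Real.pi ^ ((3:ℝ)/2)) : ℝ) : ℂ) *
    ∫ ξ : ℝ, (Complex.I * (ξ : ℂ)) ^ l *
      ((|ξ| ^ (-(1:ℝ)/2) * Real.exp (-(μ * t) * ξ ^ 2) : ℝ) : ℂ) *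
      Complex.exp (Complex.I *
        ((- y ^ 2 / (4 * t * ξ) + (Real.pi / 4) * Real.sign ξ + x * ξ : ℝ) : ℂ))

end

@[fun_prop]
theorem Real.measurable_sign : Measurable Real.sign :=
  Measurable.ite measurableSet_Iio measurable_const
    (Measurable.ite measurableSet_Ioi measurable_const measurable_const)

theorem integrable_abs_rpow_mul_exp_neg_mul_sq {b q : ℝ} (hb : 0 < b) (hq : -1 < q) :
    Integrable fun x : ℝ => |x| ^ q * Real.exp (-b * x ^ 2) := by
  have hIoi : IntegrableOn (fun x : ℝ => |x| ^ q * Real.exp (-b * x ^ 2)) (Set.Ioi 0) :=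
    (integrableOn_rpow_mul_exp_neg_mul_sq hb hq).congr_fun
      (fun x hx => by rw [abs_of_pos hx]) measurableSet_Ioi
  have hIio : IntegrableOn (fun x : ℝ => |x| ^ q * Real.exp (-b * x ^ 2)) (Set.Iio 0) := by
    rw [← (Measure.measurePreserving_neg volume).integrableOn_comp_preimage
      (Homeomorph.neg ℝ).measurableEmbedding]
    simpa [Function.comp_def] using hIoi
  rw [← integrableOn_univ, ← Set.Iio_union_Ici (a := 0), integrableOn_union,
    integrableOn_Ici_iff_integrableOn_Ioi]
  exact ⟨hIio, hIoi⟩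

theorem integral_abs_rpow_mul_exp_neg_mul_sq {b q : ℝ} (hb : 0 < b) (hq : -1 < q) :
    ∫ x : ℝ, |x| ^ q * Real.exp (-b * x ^ 2) = b ^ (-(q + 1) / 2) * Real.Gamma ((q + 1) / 2) := by
  have hcomp := integral_comp_abs (f := fun x : ℝ => x ^ q * Real.exp (-b * x ^ 2))
  have hhalf := integral_rpow_mul_exp_neg_mul_rpow two_pos hq hb
  simp only [sq_abs] at hcomp
  simp only [Real.rpow_two] at hhalf
  rw [hcomp, hhalf]
  ring

theorem norm_integral_mul_exp_I_sub_le {α : Type*} [MeasurableSpace α] {ν : Measure α}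
    {a : α → ℂ} {θ₁ θ₂ g : α → ℝ} (ha : Integrable a ν) (hθ₁ : Measurable θ₁)
    (hθ₂ : Measurable θ₂) (hg : Integrable g ν) (hbound : ∀ ξ, ‖a ξ‖ * |θ₁ ξ - θ₂ ξ| ≤ g ξ) :
    ‖(∫ ξ, a ξ * exp (I * θ₁ ξ) ∂ν) - ∫ ξ, a ξ * exp (I * θ₂ ξ) ∂ν‖ ≤ ∫ ξ, g ξ ∂ν := by
  have hint : ∀ θ : α → ℝ, Measurable θ → Integrable (fun ξ => a ξ * exp (I * θ ξ)) ν :=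
    fun θ hθ => ha.mul_bdd (by fun_prop) (ae_of_all _ fun ξ => (norm_exp_I_mul_ofReal (θ ξ)).le)
  rw [← integral_sub (hint θ₁ hθ₁) (hint θ₂ hθ₂)]
  refine norm_integral_le_of_norm_le hg (ae_of_all _ fun ξ => ?_)
  have hfactor : a ξ * exp (I * θ₁ ξ) - a ξ * exp (I * θ₂ ξ)
      = a ξ * exp (I * θ₂ ξ) * (exp (I * ↑(θ₁ ξ - θ₂ ξ)) - 1) := by
    rw [mul_sub, mul_one, mul_assoc, ← exp_add]; push_cast; ring_nf
  calc _ = ‖a ξ‖ * ‖exp (I * ↑(θ₁ ξ - θ₂ ξ)) - 1‖ := by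
        rw [hfactor, norm_mul, norm_mul, norm_exp_I_mul_ofReal, mul_one]
    _ ≤ ‖a ξ‖ * |θ₁ ξ - θ₂ ξ| := by gcongr; exact Real.norm_exp_I_mul_ofReal_sub_one_le
    _ ≤ g ξ := hbound ξ

noncomputable def kernelAmplitude (μ t : ℝ) (l : ℕ) (ξ : ℝ) : ℂ :=
  (I * (ξ : ℂ)) ^ l * ((|ξ| ^ (-(1:ℝ)/2) * Real.exp (-(μ * t) * ξ ^ 2) : ℝ) : ℂ)

section kernelAmplitude

variable {μ t : ℝ} (l : ℕ)

theorem norm_kernelAmplitude (ξ : ℝ) :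
    ‖kernelAmplitude μ t l ξ‖ = |ξ| ^ ((l : ℝ) - 1/2) * Real.exp (-(μ * t) * ξ ^ 2) := by
  have hl : (l : ℝ) + -(1:ℝ)/2 ≠ 0 := by
    intro h
    have : 2 * l = 1 := by exact_mod_cast (by linarith : (2 * l : ℝ) = 1)
    omega
  rw [kernelAmplitude, norm_mul, norm_pow, norm_mul, norm_I, one_mul, norm_real, norm_real,
    Real.norm_eq_abs, Real.norm_of_nonneg (by positivity), ← mul_assoc, ← Real.rpow_natCast,
    ← Real.rpow_add' (abs_nonneg ξ) hl]
  ring_nf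

theorem integrable_kernelAmplitude (hμt : 0 < μ * t) : Integrable (kernelAmplitude μ t l) := by
  refine (integrable_abs_rpow_mul_exp_neg_mul_sq hμt (q := (l : ℝ) - 1/2) ?_).mono'
    ?_ (ae_of_all _ fun ξ => (norm_kernelAmplitude l ξ).le)
  · linarith [l.cast_nonneg (α := ℝ)]
  · unfold kernelAmplitude; fun_prop

theorem norm_kernelAmplitude_mul_abs_cube (ht : 0 ≤ t) (ξ : ℝ) :
    ‖kernelAmplitude μ t l ξ‖ * |t * ξ ^ 3|
      = t * (|ξ| ^ ((l : ℝ) + 5/2) * Real.exp (-(μ * t) * ξ ^ 2)) := by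
  have hpos : 0 < (l : ℝ) - 1/2 + (3 : ℕ) := by push_cast; linarith [l.cast_nonneg (α := ℝ)]
  have hpow : |ξ| ^ ((l : ℝ) + 5/2) = |ξ| ^ ((l : ℝ) - 1/2) * |ξ| ^ 3 := by
    rw [← Real.rpow_natCast, ← Real.rpow_add' (abs_nonneg ξ) hpos.ne']
    ring_nf
  rw [norm_kernelAmplitude, abs_mul, abs_pow, abs_of_nonneg ht, hpow]
  ring

end kernelAmplitude

theorem norm_kernelU_sub_kernelV_le {μ t : ℝ} (hμ : 0 < μ) (ht : 0 < t) (l : ℕ) (x y : ℝ) :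
    ‖kernelU μ l x y t - kernelV μ l x y t‖ ≤
      Real.Gamma ((7 + 2 * (l : ℝ)) / 4) /
          (4 * Real.pi ^ ((3 : ℝ)/2) * μ ^ ((7 + 2 * (l : ℝ)) / 4)) *
        t ^ (-(5 : ℝ)/4 - (l : ℝ)/2) := by
  set s : ℝ := (7 + 2 * (l : ℝ)) / 4
  have hμt : 0 < μ * t := mul_pos hμ ht
  have hq : -1 < (l : ℝ) + 5/2 := by linarith [l.cast_nonneg (α := ℝ)]
  have hs : ((l : ℝ) + 5/2 + 1) / 2 = s := by ring
  have hs' : -((l : ℝ) + 5/2 + 1) / 2 = -s := by ring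
  have hts : t ^ (-(5 : ℝ)/4 - (l : ℝ)/2) = t ^ (-(1:ℝ)/2) * t * (t ^ s)⁻¹ := by
    rw [← Real.rpow_add_one ht.ne', ← Real.rpow_neg ht.le, ← Real.rpow_add ht]
    congr 1
    ring
  calc ‖kernelU μ l x y t - kernelV μ l x y t‖
      ≤ t ^ (-(1:ℝ)/2) / (4 * Real.pi ^ ((3:ℝ)/2)) *
          ∫ ξ, t * (|ξ| ^ ((l : ℝ) + 5/2) * Real.exp (-(μ * t) * ξ ^ 2)) := by
        rw [kernelU, kernelV, ← mul_sub, norm_mul, norm_real, Real.norm_of_nonneg (by positivity)]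
        gcongr
        -- both integrands are `kernelAmplitude μ t l ξ * exp (I * phase ξ)` after unfolding
        exact norm_integral_mul_exp_I_sub_le (integrable_kernelAmplitude l hμt)
          (by fun_prop) (by fun_prop) ((integrable_abs_rpow_mul_exp_neg_mul_sq hμt hq).const_mul t)
          fun ξ => le_of_eq (by rw [← norm_kernelAmplitude_mul_abs_cube l ht.le ξ]; congr 2; ring)
    _ = _ := by
        rw [integral_const_mul, integral_abs_rpow_mul_exp_neg_mul_sq hμt hq, hs, hs',
          Real.rpow_neg hμt.le, Real.mul_rpow hμ.le ht.le, hts]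
        ring

/-- pointwise and `L^∞` estimate for the difference of the kernels
`U_l` and `V_l`. -/
theorem kernelU_sub_kernelV_decay (μ : ℝ) (hμ : 0 < μ) (l : ℕ) (t : ℝ) (ht : 0 < t) :
    (∀ x y : ℝ, ‖kernelU μ l x y t - kernelV μ l x y t‖ ≤
      Real.Gamma ((7 + 2 * (l : ℝ)) / 4) /
          (4 * Real.pi ^ ((3 : ℝ)/2) * μ ^ ((7 + 2 * (l : ℝ)) / 4)) *
        t ^ (-(5 : ℝ)/4 - (l : ℝ)/2)) ∧
    eLpNorm (fun q : ℝ × ℝ => kernelU μ l q.1 q.2 t - kernelV μ l q.1 q.2 t) ⊤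
        (volume : Measure (ℝ × ℝ))
      ≤ ENNReal.ofReal
        (Real.Gamma ((7 + 2 * (l : ℝ)) / 4) /
            (4 * Real.pi ^ ((3 : ℝ)/2) * μ ^ ((7 + 2 * (l : ℝ)) / 4)) *
          t ^ (-(5 : ℝ)/4 - (l : ℝ)/2)) := by
  have hbound := norm_kernelU_sub_kernelV_le hμ ht l
  refine ⟨hbound, ?_⟩
  rw [eLpNorm_exponent_top]
  exact eLpNormEssSup_le_of_ae_bound (ae_of_all _ fun q => hbound q.1 q.2)
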